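/- arXiv:math/0607352 — 2 statements merged into one kernel-verified Lean document; each statement's English description precedes it below -/
import Mathlib

section
/- Let φ : G₁ → G₂ and ψ : H₁ → H₂ be graph morphisms, let αᵢ be an Hᵢ-labeling of Gᵢ (i = 1,2), and suppose ψ(α₁(u,{u,v})) = α₂(φ(u),{φ(u),φ(v)}) for all adjacent vertices u, v of G₁. Then F(u,i) = (φ(u),ψ(i)) maps V(G₁⋈_{α₁}H₁) into V(G₂⋈_{α₂}H₂) and is a graph morphism G₁⋈_{α₁}H₁ → G₂⋈_{α₂}H₂. -/
open Finset Filter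

open scoped Classical

universe u v

variable {V : Type u} {W : Type v}

/-- The generalized zig-zag product of an `H`-labeled graph `(G, α)` with `H`.
The labeling `α : D(G) → V(H)` is encoded as `α : V → V → W`, where for adjacent
vertices `u, v` the value `α u v` represents `α(u, {u,v})`. -/
def zigzag (G : SimpleGraph V) (H : SimpleGraph W) (α : V → V → W) :
    SimpleGraph (V × W) where
  Adj p q := G.Adj p.1 q.1 ∧ H.Adj (α p.1 q.1) p.2 ∧ H.Adj (α q.1 p.1) q.2
  symm := ⟨fun _ _ h => ⟨h.1.symm, h.2.2, h.2.1⟩⟩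
  loopless := ⟨fun p h => G.irrefl h.1⟩

/-- The vertex set of the zig-zag product `G ⋈_α H`:
pairs `(u, i)` such that some edge `e` of `G` is incident to `u` with `i`
adjacent to `α(u, e)` in `H`. -/
def zigzagVerts (G : SimpleGraph V) (H : SimpleGraph W) (α : V → V → W) :
    Set (V × W) :=
  {p | ∃ w, G.Adj p.1 w ∧ H.Adj (α p.1 w) p.2}

section

variable {V₁ V₂ W₁ W₂ : Type*} {G₁ : SimpleGraph V₁} {G₂ : SimpleGraph V₂}
  {H₁ : SimpleGraph W₁} {H₂ : SimpleGraph W₂} {α₁ : V₁ → V₁ → W₁} {α₂ : V₂ → V₂ → W₂}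
  {φ : V₁ → V₂} {ψ : W₁ → W₂}

theorem map_mem_zigzagVerts (hφ : ∀ x y : V₁, G₁.Adj x y → G₂.Adj (φ x) (φ y))
    (hψ : ∀ h h' : W₁, H₁.Adj h h' → H₂.Adj (ψ h) (ψ h'))
    (hcomp : ∀ x y : V₁, G₁.Adj x y → ψ (α₁ x y) = α₂ (φ x) (φ y))
    {p : V₁ × W₁} (hp : p ∈ zigzagVerts G₁ H₁ α₁) :
    (φ p.1, ψ p.2) ∈ zigzagVerts G₂ H₂ α₂ := by
  obtain ⟨w, hw, hlabel⟩ := hp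
  exact ⟨φ w, hφ _ _ hw, hcomp _ _ hw ▸ hψ _ _ hlabel⟩

theorem zigzag_adj_map (hφ : ∀ x y : V₁, G₁.Adj x y → G₂.Adj (φ x) (φ y))
    (hψ : ∀ h h' : W₁, H₁.Adj h h' → H₂.Adj (ψ h) (ψ h'))
    (hcomp : ∀ x y : V₁, G₁.Adj x y → ψ (α₁ x y) = α₂ (φ x) (φ y))
    {p q : V₁ × W₁} (hpq : (zigzag G₁ H₁ α₁).Adj p q) :
    (zigzag G₂ H₂ α₂).Adj (φ p.1, ψ p.2) (φ q.1, ψ q.2) := by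
  obtain ⟨hG, hp, hq⟩ := hpq
  exact ⟨hφ _ _ hG, hcomp _ _ hG ▸ hψ _ _ hp,
    hcomp _ _ hG.symm ▸ hψ _ _ hq⟩

end

/-- Given graph morphisms `φ : G₁ → G₂`, `ψ : H₁ → H₂` with
`ψ(α₁(u,{u,v})) = α₂(φ u, {φ u, φ v})` for all adjacent `u, v`, the map
`F(u,i) = (φ u, ψ i)` maps `V(G₁ ⋈ H₁)` into `V(G₂ ⋈ H₂)` and is a graph morphism of
the zig-zag products. -/
theorem zigzag_functorial {V₁ : Type*} {V₂ : Type*} {W₁ : Type*} {W₂ : Type*}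
    (G₁ : SimpleGraph V₁) (G₂ : SimpleGraph V₂)
    (H₁ : SimpleGraph W₁) (H₂ : SimpleGraph W₂)
    (α₁ : V₁ → V₁ → W₁) (α₂ : V₂ → V₂ → W₂)
    (φ : V₁ → V₂) (ψ : W₁ → W₂)
    (hφ : ∀ x y : V₁, G₁.Adj x y → G₂.Adj (φ x) (φ y))
    (hψ : ∀ h h' : W₁, H₁.Adj h h' → H₂.Adj (ψ h) (ψ h'))
    (hcomp : ∀ x y : V₁, G₁.Adj x y → ψ (α₁ x y) = α₂ (φ x) (φ y)) :
    (∀ p ∈ zigzagVerts G₁ H₁ α₁, (φ p.1, ψ p.2) ∈ zigzagVerts G₂ H₂ α₂) ∧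
    (∀ p q : V₁ × W₁, (zigzag G₁ H₁ α₁).Adj p q →
      (zigzag G₂ H₂ α₂).Adj (φ p.1, ψ p.2) (φ q.1, ψ q.2)) :=
  ⟨fun _ hp => map_mem_zigzagVerts hφ hψ hcomp hp,
    fun _ _ hpq => zigzag_adj_map hφ hψ hcomp hpq⟩
end

section
/- Let G̃, G and H be finite simple graphs, α an H-labeling of G, and p : G̃ → G a combinatorial covering map with index m ≥ 1 that is surjective on vertices. Define β(x,{x,y}) = α(p(x),{p(x),p(y)}). Assume the zig-zag products G⋈_α H and G̃⋈_β H are nonempty and have no isolated vertices. Then every eigenvalue of the normalized Laplacian of G⋈_α H is an eigenvalue of the normalized Laplacian of G̃⋈_β H. -/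
/-!
Call `f : Γ' → Γ` fiber-uniform with multiplicities `c` if each vertex `q` has exactly `c q`
neighbours over each neighbour of `f q` and none over other vertices. Then degrees multiply,
`deg q = c q · deg (f q)`, and `q ↦ √(c q) · x (f q)` lifts an eigenvector `x` of the normalized
Laplacian of `Γ` to one of `Γ'` with the same eigenvalue: the factor `√(c b)` of a neighbour `b`
cancels against its degree, and summing over the fibers produces the factor `c q`.

A combinatorial covering of index `m` is fiber-uniform with `c x = m / |p⁻¹(p x)|`: the `m` edges
over an edge `{u, v}` are spread evenly over the fiber above `u`. Fiber-uniformity passes to the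
zig-zag products with the pulled-back labeling `β`, because the `H`-conditions on an edge of
`G̃ ⋈_β H` only depend on its image in `G`.
-/

open Finset Filter

open scoped Classical

universe u v

variable {V : Type u} {W : Type v}

/-- `π : G' → G` is a combinatorial covering map with index `m`: a graph morphism such
that (1) every edge `{u,v}` of `G` has exactly `m` edges of `G'` above it, and
(2) for `π x = π y` and `v` adjacent to `π x`, the sets `N(x) ∩ π⁻¹(v)` and
`N(y) ∩ π⁻¹(v)` have the same cardinality. -/
def IsCombCovering {V' : Type*} {V : Type*} (G' : SimpleGraph V') (G : SimpleGraph V)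
    (π : V' → V) (m : ℕ) : Prop :=
  (∀ x y, G'.Adj x y → G.Adj (π x) (π y)) ∧
  (∀ u v, G.Adj u v →
    {e : Sym2 V' | e ∈ G'.edgeSet ∧ ∃ x y, e = s(x, y) ∧ π x = u ∧ π y = v}.ncard = m) ∧
  (∀ x y, π x = π y → ∀ v, G.Adj (π x) v →
    (G'.neighborSet x ∩ π ⁻¹' {v}).ncard = (G'.neighborSet y ∩ π ⁻¹' {v}).ncard)

/-- The normalized Laplacian of a finite graph: `L(u,u) = 1`,
`L(u,v) = -1/√(val u · val v)` if `u ∼ v`, and `0` otherwise. -/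
noncomputable def normLap {X : Type*} [Fintype X] (G : SimpleGraph X) : Matrix X X ℝ :=
  fun x y =>
    if x = y then 1
    else if G.Adj x y then
      -(1 / Real.sqrt (((G.neighborSet x).ncard : ℝ) * ((G.neighborSet y).ncard : ℝ)))
    else 0

open scoped Matrix

section NormLap

variable {X : Type*} [Fintype X] (Γ : SimpleGraph X)

lemma ncard_neighborSet_eq_card_filter (u : X) : (Γ.neighborSet u).ncard = #{r | Γ.Adj u r} := by
  rw [← Set.ncard_coe_finset]
  congr 1
  ext; simp

lemma ncard_neighborSet_inter_fiber_eq_card_filter {Y : Type*} (f : X → Y) (u : X) (y : Y) :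
    (Γ.neighborSet u ∩ f ⁻¹' {y}).ncard = #{r | Γ.Adj u r ∧ f r = y} := by
  rw [← Set.ncard_coe_finset]
  congr 1
  ext; simp

lemma normLap_mulVec_apply (x : X → ℝ) (u : X) :
    (normLap Γ *ᵥ x) u = x u - ∑ r, if Γ.Adj u r then
      x r / √(((Γ.neighborSet u).ncard : ℝ) * (Γ.neighborSet r).ncard) else 0 := by
  have hentry : ∀ r, normLap Γ u r * x r = (if u = r then x r else 0) - if Γ.Adj u r then
      x r / √(((Γ.neighborSet u).ncard : ℝ) * (Γ.neighborSet r).ncard) else 0 := by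
    intro r
    unfold normLap
    by_cases hur : u = r
    · subst hur; simp
    · by_cases hadj : Γ.Adj u r <;> simp [hur, hadj, div_eq_inv_mul]
  simp only [Matrix.mulVec, dotProduct, hentry, Finset.sum_sub_distrib, Finset.sum_ite_eq,
    Finset.mem_univ, if_true]

end NormLap

lemma sqrt_mul_div_sqrt_mul_mul {a b c c' : ℝ} (hc' : 0 < c') (hc : 0 ≤ c) (t : ℝ) :
    √c' * t / √(c * a * (c' * b)) = (√c)⁻¹ * (t / √(a * b)) := by
  rw [show c * a * (c' * b) = c * (c' * (a * b)) by ring, Real.sqrt_mul hc,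
    Real.sqrt_mul hc'.le]
  have : √c' ≠ 0 := (Real.sqrt_pos.mpr hc').ne'
  field_simp

def IsFiberUniform {X' X : Type*} (Γ' : SimpleGraph X') (Γ : SimpleGraph X) (f : X' → X)
    (c : X' → ℕ) : Prop :=
  ∀ q r, (Γ'.neighborSet q ∩ f ⁻¹' {r}).ncard = if Γ.Adj (f q) r then c q else 0

namespace IsFiberUniform

variable {X' X : Type*} [Fintype X'] {Γ' : SimpleGraph X'} {Γ : SimpleGraph X}
  {f : X' → X} {c : X' → ℕ}

lemma adj_and_pos_of_adj (h : IsFiberUniform Γ' Γ f c) {q b : X'} (hqb : Γ'.Adj q b) :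
    Γ.Adj (f q) (f b) ∧ 0 < c q := by
  have hne : (Γ'.neighborSet q ∩ f ⁻¹' {f b}).ncard ≠ 0 :=
    Set.ncard_ne_zero_of_mem (a := b) ⟨hqb, rfl⟩
  rw [h q (f b)] at hne
  split_ifs at hne with hadj
  · exact ⟨hadj, Nat.pos_of_ne_zero hne⟩
  · exact absurd rfl hne

lemma sum_ite_adj_comp [Fintype X] (h : IsFiberUniform Γ' Γ f c) (g : X → ℝ) (q : X') :
    ∑ b, (if Γ'.Adj q b then g (f b) else 0) = c q * ∑ r, if Γ.Adj (f q) r then g r else 0 := by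
  have hfiber : ∀ r, #{b ∈ {b | Γ'.Adj q b} | f b = r} = if Γ.Adj (f q) r then c q else 0 := by
    intro r
    rw [Finset.filter_filter, ← ncard_neighborSet_inter_fiber_eq_card_filter, h q r]
  rw [← Finset.sum_filter, ← Finset.sum_fiberwise' _ f, Finset.mul_sum]
  refine Finset.sum_congr rfl fun r _ => ?_
  rw [Finset.sum_const, nsmul_eq_mul, hfiber]
  split_ifs <;> simp

lemma ncard_neighborSet [Fintype X] (h : IsFiberUniform Γ' Γ f c) (q : X') :
    ((Γ'.neighborSet q).ncard : ℝ) = c q * (Γ.neighborSet (f q)).ncard := by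
  rw [ncard_neighborSet_eq_card_filter, ncard_neighborSet_eq_card_filter]
  simpa using h.sum_ite_adj_comp (fun _ => 1) q

lemma normLap_mulVec_lift [Fintype X] (h : IsFiberUniform Γ' Γ f c) (hc : ∀ q, 0 < c q)
    (x : X → ℝ) :
    normLap Γ' *ᵥ (fun q => √(c q) * x (f q)) = fun q => √(c q) * (normLap Γ *ᵥ x) (f q) := by
  funext q
  set d : X → ℝ := fun r => (Γ.neighborSet r).ncard
  have hterm : ∀ b, (if Γ'.Adj q b then √(c b) * x (f b) /
        √(((Γ'.neighborSet q).ncard : ℝ) * (Γ'.neighborSet b).ncard) else 0) =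
      (√(c q))⁻¹ * if Γ'.Adj q b then x (f b) / √(d (f q) * d (f b)) else 0 := by
    intro b
    split_ifs
    · rw [h.ncard_neighborSet, h.ncard_neighborSet]
      exact sqrt_mul_div_sqrt_mul_mul (Nat.cast_pos.mpr (hc b)) (Nat.cast_nonneg _) _
    · rw [mul_zero]
  rw [normLap_mulVec_apply, normLap_mulVec_apply, Finset.sum_congr rfl fun b _ => hterm b,
    ← Finset.mul_sum, h.sum_ite_adj_comp (fun r => x r / √(d (f q) * d r)), ← mul_assoc,
    inv_mul_eq_div, Real.div_sqrt, mul_sub]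

lemma exists_normLap_eigenvector [Fintype X] (h : IsFiberUniform Γ' Γ f c) (hc : ∀ q, 0 < c q)
    (hf : Function.Surjective f) {μ : ℝ} {x : X → ℝ} (hx : x ≠ 0) (hμ : normLap Γ *ᵥ x = μ • x) :
    ∃ y : X' → ℝ, y ≠ 0 ∧ normLap Γ' *ᵥ y = μ • y := by
  refine ⟨fun q => √(c q) * x (f q), ?_, ?_⟩
  · obtain ⟨r, hr⟩ := Function.ne_iff.mp hx
    obtain ⟨q, rfl⟩ := hf r
    refine Function.ne_iff.mpr ⟨q, mul_ne_zero ?_ hr⟩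
    exact (Real.sqrt_pos.mpr (Nat.cast_pos.mpr (hc q))).ne'
  · rw [h.normLap_mulVec_lift hc, hμ]
    funext q
    simp only [Pi.smul_apply, smul_eq_mul]
    ring

end IsFiberUniform

namespace IsCombCovering

variable {V' : Type*} [Fintype V'] {G' : SimpleGraph V'} {G : SimpleGraph V} {p : V' → V}
  {m : ℕ}

lemma card_fiber_mul_ncard (hp : IsCombCovering G' G p m) {x : V'} {v : V}
    (hxv : G.Adj (p x) v) : (p ⁻¹' {p x}).ncard * (G'.neighborSet x ∩ p ⁻¹' {v}).ncard = m := by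
  set P : V' × V' → Prop := fun e => G'.Adj e.1 e.2 ∧ p e.1 = p x ∧ p e.2 = v
  have hedges : {e : Sym2 V' | e ∈ G'.edgeSet ∧ ∃ a b, e = s(a, b) ∧ p a = p x ∧ p b = v} =
      (fun e : V' × V' => s(e.1, e.2)) '' {e | P e} := by
    ext e
    constructor
    · rintro ⟨he, a, b, rfl, ha, hb⟩
      exact ⟨(a, b), ⟨he, ha, hb⟩, rfl⟩
    · rintro ⟨⟨a, b⟩, ⟨hab, ha, hb⟩, rfl⟩
      exact ⟨hab, a, b, rfl, ha, hb⟩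
  have hinj : Set.InjOn (fun e : V' × V' => s(e.1, e.2)) {e | P e} := by
    rintro ⟨a, b⟩ ⟨-, ha, hb⟩ ⟨a', b'⟩ ⟨-, -, hb'⟩ heq
    rcases Sym2.eq_iff.mp heq with ⟨rfl, rfl⟩ | ⟨rfl, rfl⟩
    · rfl
    · exact absurd (ha.symm.trans hb') hxv.ne
  have hfiber : ∀ a, #{b | P (a, b)} =
      if p a = p x then (G'.neighborSet x ∩ p ⁻¹' {v}).ncard else 0 := by
    intro a
    split_ifs with ha
    · rw [← hp.2.2 a x ha v (ha ▸ hxv), ncard_neighborSet_inter_fiber_eq_card_filter]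
      simp [P, ha]
    · simp [P, ha]
  calc (p ⁻¹' {p x}).ncard * (G'.neighborSet x ∩ p ⁻¹' {v}).ncard
      = ∑ a, #{b | P (a, b)} := by
        simp only [hfiber, Finset.sum_ite, Finset.sum_const_zero, add_zero, Finset.sum_const,
          smul_eq_mul]
        congr 1
        rw [← Set.ncard_coe_finset]
        congr 1; ext; simp
    _ = {e | P e}.ncard := by
        rw [← Finset.coe_filter_univ, Set.ncard_coe_finset, Finset.card_filter,
          Fintype.sum_prod_type]
        simp only [Finset.card_filter]
        rfl
    _ = m := by rw [← hp.2.1 _ _ hxv, hedges, hinj.ncard_image]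

lemma isFiberUniform (hp : IsCombCovering G' G p m) :
    IsFiberUniform G' G p (fun x => m / (p ⁻¹' {p x}).ncard) := by
  intro x v
  split_ifs with hxv
  · have hfiber : 0 < (p ⁻¹' {p x}).ncard :=
      Nat.pos_of_ne_zero (Set.ncard_ne_zero_of_mem (Set.mem_preimage.mpr rfl))
    rw [← hp.card_fiber_mul_ncard hxv]
    exact (Nat.mul_div_cancel_left _ hfiber).symm
  · refine (Set.ncard_eq_zero).mpr (Set.eq_empty_of_forall_notMem ?_)
    rintro y ⟨hxy, rfl⟩
    exact hxv (hp.1 x y hxy)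

lemma exists_adj_of_adj (hp : IsCombCovering G' G p m) (hm : 0 < m) {x : V'} {v : V}
    (hxv : G.Adj (p x) v) : ∃ y, G'.Adj x y ∧ p y = v := by
  have hne : (G'.neighborSet x ∩ p ⁻¹' {v}).ncard ≠ 0 := by
    intro h0
    rw [← hp.card_fiber_mul_ncard hxv, h0, mul_zero] at hm
    exact hm.false
  exact Set.nonempty_of_ncard_ne_zero hne

end IsCombCovering

section Zigzag

variable {V' : Type*} {G' : SimpleGraph V'} {G : SimpleGraph V} (H : SimpleGraph W)
  (α : V → V → W) {p : V' → V}

@[simp]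
lemma zigzag_adj {a b : V × W} :
    (zigzag G H α).Adj a b ↔ G.Adj a.1 b.1 ∧ H.Adj (α a.1 b.1) a.2 ∧ H.Adj (α b.1 a.1) b.2 :=
  Iff.rfl

lemma mapsTo_zigzagVerts (hp : ∀ x y, G'.Adj x y → G.Adj (p x) (p y)) :
    Set.MapsTo (Prod.map p id) (zigzagVerts G' H (fun x y => α (p x) (p y)))
      (zigzagVerts G H α) :=
  fun _ ⟨w, hw, hH⟩ => ⟨p w, hp _ _ hw, hH⟩

lemma surjOn_zigzagVerts [Fintype V'] {m : ℕ} (hp : IsCombCovering G' G p m) (hm : 0 < m)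
    (hsurj : Function.Surjective p) :
    Set.SurjOn (Prod.map p id) (zigzagVerts G' H (fun x y => α (p x) (p y)))
      (zigzagVerts G H α) := by
  rintro ⟨u, i⟩ ⟨v, huv, hH⟩
  obtain ⟨x, rfl⟩ := hsurj u
  obtain ⟨y, hxy, rfl⟩ := hp.exists_adj_of_adj hm huv
  exact ⟨(x, i), ⟨y, hxy, hH⟩, rfl⟩

def zigzagProj (hp : ∀ x y, G'.Adj x y → G.Adj (p x) (p y)) :
    zigzagVerts G' H (fun x y => α (p x) (p y)) → zigzagVerts G H α :=
  (mapsTo_zigzagVerts H α hp).restrict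

lemma ncard_induce_zigzag_neighborSet_inter_fiber [Fintype V'] [Fintype W]
    (hp : ∀ x y, G'.Adj x y → G.Adj (p x) (p y)) (q : zigzagVerts G' H (fun x y => α (p x) (p y)))
    (r : zigzagVerts G H α) :
    (((zigzag G' H (fun x y => α (p x) (p y))).induce
        (zigzagVerts G' H (fun x y => α (p x) (p y)))).neighborSet q ∩
        zigzagProj H α hp ⁻¹' {r}).ncard =
      if H.Adj (α (p q.1.1) r.1.1) q.1.2 ∧ H.Adj (α r.1.1 (p q.1.1)) r.1.2 then
        (G'.neighborSet q.1.1 ∩ p ⁻¹' {r.1.1}).ncard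
      else 0 := by
  obtain ⟨⟨x, i⟩, hq⟩ := q
  obtain ⟨⟨v, j⟩, hr⟩ := r
  have hmem : ∀ z k hb, (⟨(z, k), hb⟩ : zigzagVerts G' H (fun x y => α (p x) (p y))) ∈
      ((zigzag G' H (fun x y => α (p x) (p y))).induce
        (zigzagVerts G' H (fun x y => α (p x) (p y)))).neighborSet ⟨(x, i), hq⟩ ∩
        zigzagProj H α hp ⁻¹' {⟨(v, j), hr⟩} ↔
      (G'.Adj x z ∧ p z = v ∧ k = j) ∧ H.Adj (α (p x) v) i ∧ H.Adj (α v (p x)) j := by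
    intro z k hb
    simp only [Set.mem_inter_iff, SimpleGraph.mem_neighborSet, SimpleGraph.induce_adj,
      zigzag_adj, Set.mem_preimage, Set.mem_singleton_iff, Subtype.ext_iff, zigzagProj,
      Set.MapsTo.val_restrict_apply, Prod.map, id, Prod.mk.injEq]
    constructor
    · rintro ⟨⟨hxz, hi, hk⟩, rfl, rfl⟩
      exact ⟨⟨hxz, rfl, rfl⟩, hi, hk⟩
    · rintro ⟨⟨hxz, rfl, rfl⟩, hi, hk⟩
      exact ⟨⟨hxz, hi, hk⟩, rfl, rfl⟩
  split_ifs with hH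
  · refine Set.ncard_congr (fun b _ => b.1.1) ?_ ?_ ?_
    · rintro ⟨⟨z, k⟩, hb⟩ hzk
      obtain ⟨⟨hxz, hpz, -⟩, -⟩ := (hmem z k hb).mp hzk
      exact ⟨hxz, hpz⟩
    · rintro ⟨⟨z, k⟩, hb⟩ ⟨⟨z', k'⟩, hb'⟩ hzk hzk' (rfl : z = z')
      obtain ⟨⟨-, -, rfl⟩, -⟩ := (hmem z k hb).mp hzk
      obtain ⟨⟨-, -, rfl⟩, -⟩ := (hmem z k' hb').mp hzk'
      rfl
    · rintro z ⟨hxz, rfl : p z = v⟩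
      have hb : (z, j) ∈ zigzagVerts G' H (fun x y => α (p x) (p y)) := ⟨x, hxz.symm, hH.2⟩
      exact ⟨⟨(z, j), hb⟩, (hmem z j hb).mpr ⟨⟨hxz, rfl, rfl⟩, hH⟩, rfl⟩
  · refine (Set.ncard_eq_zero).mpr (Set.eq_empty_of_forall_notMem ?_)
    rintro ⟨⟨z, k⟩, hb⟩ hzk
    exact hH ((hmem z k hb).mp hzk).2

lemma IsFiberUniform.zigzag_induce [Fintype V'] [Fintype W] {c : V' → ℕ}
    (h : IsFiberUniform G' G p c) :
    IsFiberUniform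
      ((zigzag G' H (fun x y => α (p x) (p y))).induce
        (zigzagVerts G' H (fun x y => α (p x) (p y))))
      ((zigzag G H α).induce (zigzagVerts G H α))
      (zigzagProj H α fun _ _ hxy => (h.adj_and_pos_of_adj hxy).1) (fun q => c q.1.1) := by
  intro q r
  rw [ncard_induce_zigzag_neighborSet_inter_fiber, h]
  simp only [SimpleGraph.induce_adj, zigzagProj, Set.MapsTo.val_restrict_apply, zigzag_adj,
    Prod.map_fst, Prod.map_snd, id]
  split_ifs <;> tauto

end Zigzag

theorem zigzag_comb_cover_laplacian_spectrum_general {V' : Type*} [Fintype V'] [Fintype V]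
    [Fintype W]
    (G' : SimpleGraph V') (G : SimpleGraph V) (H : SimpleGraph W)
    (α : V → V → W) (p : V' → V) (m : ℕ) (hm : 1 ≤ m)
    (hp : IsCombCovering G' G p m) (hsurj : Function.Surjective p) :
    ∀ μ : ℝ,
      (∃ x : ↥(zigzagVerts G H α) → ℝ, x ≠ 0 ∧
        (normLap ((zigzag G H α).induce (zigzagVerts G H α))).mulVec x = μ • x) →
      ∃ y : ↥(zigzagVerts G' H (fun x y => α (p x) (p y))) → ℝ, y ≠ 0 ∧
        (normLap ((zigzag G' H (fun x y => α (p x) (p y))).induce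
          (zigzagVerts G' H (fun x y => α (p x) (p y))))).mulVec y = μ • y := by
  rintro μ ⟨x, hx, hμ⟩
  have hunif := hp.isFiberUniform
  refine (hunif.zigzag_induce H α).exists_normLap_eigenvector ?_ ?_ hx hμ
  · rintro ⟨⟨x, i⟩, w, hxw, -⟩
    exact (hunif.adj_and_pos_of_adj hxw).2
  · exact (Set.MapsTo.restrict_surjective_iff _).mpr (surjOn_zigzagVerts H α hp hm hsurj)

/-- For finite graphs `G̃`, `G`, `H`, an `H`-labeling `α` of `G` and a
vertex-surjective combinatorial covering map `p : G̃ → G` with index `m ≥ 1`, with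
`β(x,{x,y}) = α(p x, {p x, p y})` and both zig-zag products nonempty without isolated
vertices, every eigenvalue of the normalized Laplacian of `G ⋈_α H` is an eigenvalue of
the normalized Laplacian of `G̃ ⋈_β H`. -/
theorem zigzag_comb_cover_laplacian_spectrum {V' : Type*} [Fintype V'] [Fintype V]
    [Fintype W]
    (G' : SimpleGraph V') (G : SimpleGraph V) (H : SimpleGraph W)
    (α : V → V → W) (p : V' → V) (m : ℕ) (hm : 1 ≤ m)
    (hp : IsCombCovering G' G p m) (hsurj : Function.Surjective p)
    (hne : (zigzagVerts G H α).Nonempty)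
    (hne' : (zigzagVerts G' H (fun x y => α (p x) (p y))).Nonempty)
    (hnoiso : ∀ q ∈ zigzagVerts G H α, ∃ q', (zigzag G H α).Adj q q')
    (hnoiso' : ∀ q ∈ zigzagVerts G' H (fun x y => α (p x) (p y)),
      ∃ q', (zigzag G' H (fun x y => α (p x) (p y))).Adj q q') :
    ∀ μ : ℝ,
      (∃ x : ↥(zigzagVerts G H α) → ℝ, x ≠ 0 ∧
        (normLap ((zigzag G H α).induce (zigzagVerts G H α))).mulVec x = μ • x) →
      ∃ y : ↥(zigzagVerts G' H (fun x y => α (p x) (p y))) → ℝ, y ≠ 0 ∧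
        (normLap ((zigzag G' H (fun x y => α (p x) (p y))).induce
          (zigzagVerts G' H (fun x y => α (p x) (p y))))).mulVec y = μ • y :=
  zigzag_comb_cover_laplacian_spectrum_general G' G H α p m hm hp hsurj
end
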